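/- Lower bound on the concave objective (from the proof of Lemma 3.2): for θ₀, θ ∈ ℝ^Λ and α ∈ ℝ^Λ, define F(θ) = Σ_λ θ_λ α_λ − H(θ) with H(θ) = ∫_E f_θ dμ, set α_{0,λ} = ∫_E f_{θ₀} ψ_λ dμ and b = exp(‖log f_{θ₀}‖_∞). Then F(θ₀) − F(θ) ≥ (1/(2b))·e^{−A‖θ₀−θ‖₂}·‖θ₀ − θ‖₂² − ‖α₀ − α‖₂·‖θ₀ − θ‖₂. -/

import Mathlib

/-!
With `g₀ = Σ θ₀_λ ψ_λ`, `g = Σ θ_λ ψ_λ` and `u = g₀ - g`, the difference `F(θ₀) - F(θ)` equals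
the Bregman divergence `∫ (e^g - e^{g₀} + e^{g₀} u) dμ` minus `(α₀ - α)·(θ₀ - θ)`, because
`∫ e^{g₀} u dμ = α₀·(θ₀ - θ)`. The elementary inequality `e^x - 1 - x ≥ e^{-|x|} x² / 2`, together
with `e^{g₀} ≥ 1/b` and `|u| ≤ A‖θ₀ - θ‖₂`, bounds the integrand below by
`(1/(2b)) e^{-A‖θ₀ - θ‖₂} u²`; orthonormality gives `∫ u² dμ = ‖θ₀ - θ‖₂²`, and Cauchy–Schwarz
handles the linear term.
-/

open MeasureTheory Real

theorem sq_div_two_le_sub_one_mul_exp_add_one {t : ℝ} (ht : 0 ≤ t) :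
    t ^ 2 / 2 ≤ (t - 1) * exp t + 1 := by
  let h : ℝ → ℝ := fun t => (t - 1) * exp t + 1 - t ^ 2 / 2
  have hderiv (t : ℝ) : HasDerivAt h (t * (exp t - 1)) t :=
    ((((hasDerivAt_id t).sub_const 1).mul (hasDerivAt_exp t)).add_const 1 |>.sub
      ((hasDerivAt_pow 2 t).div_const 2)).congr_deriv (by simp; ring)
  have hmono : MonotoneOn h (Set.Ici 0) := by
    refine monotoneOn_of_hasDerivWithinAt_nonneg (convex_Ici 0) (by fun_prop)
      (fun t _ => (hderiv t).hasDerivWithinAt) fun t ht => ?_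
    rw [interior_Ici] at ht
    exact mul_nonneg ht.le (sub_nonneg.2 (one_le_exp ht.le))
  have h0t : h 0 ≤ h t := hmono Set.self_mem_Ici ht ht
  norm_num [h] at h0t
  linarith

theorem exp_neg_abs_mul_sq_div_two_le (x : ℝ) : exp (-|x|) * x ^ 2 / 2 ≤ exp x - 1 - x := by
  rcases le_or_gt 0 x with hx | hx
  · rw [abs_of_nonneg hx]
    have hquad := quadratic_le_exp_of_nonneg hx
    have hexp_neg : exp (-x) ≤ 1 := exp_le_one_iff.2 (neg_nonpos.2 hx)
    nlinarith [sq_nonneg x]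
  · rw [abs_of_neg hx, neg_neg]
    have hscaled := mul_le_mul_of_nonneg_left
      (sq_div_two_le_sub_one_mul_exp_add_one (neg_nonneg.2 hx.le)) (exp_pos x).le
    have hinv : exp x * exp (-x) = 1 := by rw [← exp_add, add_neg_cancel, exp_zero]
    nlinarith

theorem exp_mul_exp_neg_abs_sub_mul_sq_le (a b : ℝ) :
    exp a * exp (-|a - b|) * (a - b) ^ 2 / 2 ≤ exp b - exp a + exp a * (a - b) := by
  have hscaled := mul_le_mul_of_nonneg_left (exp_neg_abs_mul_sq_div_two_le (b - a)) (exp_pos a).le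
  rw [abs_sub_comm, ← neg_sub a b, neg_sq] at hscaled
  calc exp a * exp (-|a - b|) * (a - b) ^ 2 / 2
      ≤ exp a * (exp (-(a - b)) - 1 - -(a - b)) := by linarith
    _ = exp b - exp a + exp a * (a - b) := by rw [mul_sub, mul_sub, ← exp_add]; ring_nf

section

variable {E : Type*} [MeasurableSpace E] {μ : Measure E}

theorem integrable_of_abs_le [IsFiniteMeasure μ] {f : E → ℝ} (hf : Measurable f) {C : ℝ}
    (hC : ∀ x, |f x| ≤ C) : Integrable f μ :=
  .of_bound hf.aestronglyMeasurable C (.of_forall hC)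

theorem integrable_exp_of_le [IsFiniteMeasure μ] {f : E → ℝ} (hf : Measurable f) {C : ℝ}
    (hC : ∀ x, f x ≤ C) : Integrable (fun x => exp (f x)) μ :=
  integrable_of_abs_le hf.exp fun x => by
    rw [abs_of_pos (exp_pos _)]
    exact exp_le_exp.2 (hC x)

theorem integral_exp_bregman_ge [IsFiniteMeasure μ] {f g : E → ℝ} (hf : Measurable f)
    (hg : Measurable g) {B K : ℝ} (hfB : ∀ x, |f x| ≤ B) (hfg : ∀ x, |f x - g x| ≤ K) :
    1 / (2 * exp B) * exp (-K) * ∫ x, (f x - g x) ^ 2 ∂μ ≤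
      ∫ x, exp (g x) ∂μ - ∫ x, exp (f x) ∂μ + ∫ x, exp (f x) * (f x - g x) ∂μ := by
  have hexp_f := integrable_exp_of_le (μ := μ) hf fun x => (le_abs_self _).trans (hfB x)
  have hexp_g := integrable_exp_of_le (μ := μ) hg (C := B + K) fun x => by
    linarith [neg_abs_le (f x - g x), le_abs_self (f x), hfB x, hfg x]
  have hlin : Integrable (fun x => exp (f x) * (f x - g x)) μ :=
    hexp_f.mul_bdd (hf.sub hg).aestronglyMeasurable (.of_forall hfg)
  have hsq : Integrable (fun x => (f x - g x) ^ 2) μ :=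
    integrable_of_abs_le ((hf.sub hg).pow_const 2) (C := K ^ 2) fun x => by
      rw [abs_pow]
      exact pow_le_pow_left₀ (abs_nonneg _) (hfg x) 2
  have hgap : Integrable (fun x => exp (g x) - exp (f x)) μ := hexp_g.sub hexp_f
  rw [← integral_const_mul, ← integral_sub hexp_g hexp_f, ← integral_add hgap hlin]
  refine integral_mono (hsq.const_mul _) (hgap.add hlin) fun x => ?_
  have hB : exp (-B) ≤ exp (f x) := exp_le_exp.2 (neg_le_of_abs_le (hfB x))
  have hK : exp (-K) ≤ exp (-|f x - g x|) := exp_le_exp.2 (neg_le_neg (hfg x))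
  calc 1 / (2 * exp B) * exp (-K) * (f x - g x) ^ 2
      = exp (-B) * exp (-K) * (f x - g x) ^ 2 / 2 := by
        rw [exp_neg B]; ring
    _ ≤ exp (f x) * exp (-|f x - g x|) * (f x - g x) ^ 2 / 2 := by gcongr
    _ ≤ _ := exp_mul_exp_neg_abs_sub_mul_sq_le _ _

variable {Λ : Type*} [Fintype Λ] {ψ : Λ → E → ℝ}

theorem measurable_sum_mul (hmeas : ∀ l, Measurable (ψ l)) (c : Λ → ℝ) :
    Measurable fun x => ∑ l, c l * ψ l x :=
  Finset.measurable_sum _ fun l _ => (hmeas l).const_mul _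

theorem integral_mul_sum_mul (hmeas : ∀ l, Measurable (ψ l))
    (hbdd : ∀ l, ∃ C : ℝ, ∀ x, |ψ l x| ≤ C) {f : E → ℝ} (hf : Integrable f μ) (c : Λ → ℝ) :
    ∫ x, f x * ∑ l, c l * ψ l x ∂μ = ∑ l, c l * ∫ x, f x * ψ l x ∂μ := by
  have hfψ (l : Λ) : Integrable (fun x => f x * ψ l x) μ :=
    have ⟨C, hC⟩ := hbdd l
    hf.mul_bdd (hmeas l).aestronglyMeasurable (.of_forall hC)
  simp_rw [Finset.mul_sum, mul_left_comm (f _)]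
  rw [integral_finsetSum _ fun l _ => (hfψ l).const_mul (c l)]
  simp_rw [integral_const_mul]

theorem integral_sum_mul_sq [IsFiniteMeasure μ] [DecidableEq Λ] (hmeas : ∀ l, Measurable (ψ l))
    (hbdd : ∀ l, ∃ C : ℝ, ∀ x, |ψ l x| ≤ C)
    (horth : ∀ l k, ∫ x, ψ l x * ψ k x ∂μ = if l = k then (1 : ℝ) else 0) (c : Λ → ℝ) :
    ∫ x, (∑ l, c l * ψ l x) ^ 2 ∂μ = ∑ l, c l ^ 2 := by
  have hψ (l : Λ) : Integrable (ψ l) μ :=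
    have ⟨_, hC⟩ := hbdd l
    integrable_of_abs_le (hmeas l) hC
  have hexpand (x : E) : (∑ l, c l * ψ l x) ^ 2 = ∑ l, ∑ k, c l * c k * (ψ l x * ψ k x) := by
    rw [sq, Finset.sum_mul_sum]
    exact Finset.sum_congr rfl fun l _ => Finset.sum_congr rfl fun k _ => by ring
  have hψψ (l k : Λ) : Integrable (fun x => c l * c k * (ψ l x * ψ k x)) μ :=
    have ⟨C, hC⟩ := hbdd l
    ((hψ k).bdd_mul (hmeas l).aestronglyMeasurable (.of_forall hC)).const_mul _
  simp_rw [hexpand]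
  rw [integral_finsetSum _ fun l _ => integrable_finsetSum _ fun k _ => hψψ l k]
  simp_rw [integral_finsetSum _ fun k _ => hψψ _ k, integral_const_mul, horth]
  simp [sq]

end

theorem concave_objective_lower_bound_general
    {E : Type*} [MeasurableSpace E] (μ : Measure E) [IsFiniteMeasure μ]
    {Λ : Type*} [Fintype Λ] [DecidableEq Λ] (ψ : Λ → E → ℝ)
    (hmeas : ∀ l, Measurable (ψ l))
    (hbdd : ∀ l, ∃ C : ℝ, ∀ x, |ψ l x| ≤ C)
    (horth : ∀ l k, ∫ x, ψ l x * ψ k x ∂μ = if l = k then (1 : ℝ) else 0)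
    (A : ℝ)
    (hA : ∀ c : Λ → ℝ, ∀ x, |∑ l, c l * ψ l x| ≤
      A * Real.sqrt (∫ y, (∑ l, c l * ψ l y) ^ 2 ∂μ))
    (θ₀ θ : Λ → ℝ) (α : Λ → ℝ) :
    (1 / (2 * Real.exp (⨆ x, |∑ l, θ₀ l * ψ l x|))) *
        Real.exp (-(A * Real.sqrt (∑ l, (θ₀ l - θ l) ^ 2))) * (∑ l, (θ₀ l - θ l) ^ 2) -
      Real.sqrt (∑ l,
          ((∫ x, Real.exp (∑ l', θ₀ l' * ψ l' x) * ψ l x ∂μ) - α l) ^ 2) *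
        Real.sqrt (∑ l, (θ₀ l - θ l) ^ 2) ≤
      ((∑ l, θ₀ l * α l) - ∫ x, Real.exp (∑ l, θ₀ l * ψ l x) ∂μ) -
        ((∑ l, θ l * α l) - ∫ x, Real.exp (∑ l, θ l * ψ l x) ∂μ) := by
  have hsup (c : Λ → ℝ) (x : E) : |∑ l, c l * ψ l x| ≤ A * √(∑ l, c l ^ 2) :=
    integral_sum_mul_sq hmeas hbdd horth c ▸ hA c x
  have hdiff (x : E) :
      ∑ l, θ₀ l * ψ l x - ∑ l, θ l * ψ l x = ∑ l, (θ₀ - θ) l * ψ l x := by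
    simp only [Pi.sub_apply, sub_mul, Finset.sum_sub_distrib]
  have hbregman := integral_exp_bregman_ge (μ := μ) (measurable_sum_mul hmeas θ₀)
    (measurable_sum_mul hmeas θ) (fun x => le_ciSup ⟨_, Set.forall_mem_range.2 (hsup θ₀)⟩ x)
    (fun x => hdiff x ▸ hsup (θ₀ - θ) x)
  simp only [hdiff] at hbregman
  rw [integral_sum_mul_sq hmeas hbdd horth,
    integral_mul_sum_mul hmeas hbdd (integrable_exp_of_le (measurable_sum_mul hmeas θ₀)
      fun x => (le_abs_self _).trans (hsup θ₀ x))] at hbregman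
  have hcs := Real.sum_mul_le_sqrt_mul_sqrt Finset.univ
    (fun l => ∫ x, exp (∑ l', θ₀ l' * ψ l' x) * ψ l x ∂μ - α l) (θ₀ - θ)
  simp only [Pi.sub_apply] at hbregman hcs
  have hlin : ∑ l, (∫ x, exp (∑ l', θ₀ l' * ψ l' x) * ψ l x ∂μ - α l) * (θ₀ l - θ l) =
      ∑ l, (θ₀ l - θ l) * ∫ x, exp (∑ l', θ₀ l' * ψ l' x) * ψ l x ∂μ -
        (∑ l, θ₀ l * α l - ∑ l, θ l * α l) := by
    simp only [← Finset.sum_sub_distrib]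
    exact Finset.sum_congr rfl fun l _ => by ring
  linarith

/-- Lower bound on the concave objective (from the proof of Lemma 3.2): with
`F(θ) = Σ_λ θ_λ α_λ − H(θ)`, `H(θ) = ∫ f_θ dμ`, `α_{0,λ} = ∫ f_{θ₀} ψ_λ dμ` and
`b = exp(‖log f_{θ₀}‖_∞)`, one has
`F(θ₀) − F(θ) ≥ (1/(2b))·e^{−A‖θ₀−θ‖₂}·‖θ₀ − θ‖₂² − ‖α₀ − α‖₂·‖θ₀ − θ‖₂`. -/
theorem concave_objective_lower_bound
    {E : Type*} [MeasurableSpace E] (μ : Measure E) [IsFiniteMeasure μ]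
    {Λ : Type*} [Fintype Λ] [DecidableEq Λ] (ψ : Λ → E → ℝ)
    (hmeas : ∀ l, Measurable (ψ l))
    (hbdd : ∀ l, ∃ C : ℝ, ∀ x, |ψ l x| ≤ C)
    (horth : ∀ l k, ∫ x, ψ l x * ψ k x ∂μ = if l = k then (1 : ℝ) else 0)
    (A : ℝ) (hApos : 0 < A)
    (hA : ∀ c : Λ → ℝ, ∀ x, |∑ l, c l * ψ l x| ≤
      A * Real.sqrt (∫ y, (∑ l, c l * ψ l y) ^ 2 ∂μ))
    (θ₀ θ : Λ → ℝ) (α : Λ → ℝ) :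
    (1 / (2 * Real.exp (⨆ x, |∑ l, θ₀ l * ψ l x|))) *
        Real.exp (-(A * Real.sqrt (∑ l, (θ₀ l - θ l) ^ 2))) * (∑ l, (θ₀ l - θ l) ^ 2) -
      Real.sqrt (∑ l,
          ((∫ x, Real.exp (∑ l', θ₀ l' * ψ l' x) * ψ l x ∂μ) - α l) ^ 2) *
        Real.sqrt (∑ l, (θ₀ l - θ l) ^ 2) ≤
      ((∑ l, θ₀ l * α l) - ∫ x, Real.exp (∑ l, θ₀ l * ψ l x) ∂μ) -
        ((∑ l, θ l * α l) - ∫ x, Real.exp (∑ l, θ l * ψ l x) ∂μ) :=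
  concave_objective_lower_bound_general μ ψ hmeas hbdd horth A hA θ₀ θ α
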